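/- arXiv:1710.00889 — 7 statements merged into one kernel-verified Lean document; each statement's English description precedes it below -/
import Mathlib

section
/- Let U be a nonsingular complex matrix and let V = (1/2)(U + η U^{-1}) for a constant η. If v is an eigenvalue of V, then at least one of u⁺ = v + i√(η − v²) or u⁻ = v − i√(η − v²) is an eigenvalue of U. Conversely, every eigenvalue u of U satisfies u = v ± i√(η − v²) for some eigenvalue v of V. -/
/-! If `a * b = η` then `u * ((a + b) - (u + η u⁻¹)) = -(a - u) * (b - u)` with commuting factors,
so `a + b` lies in the spectrum of `u + η u⁻¹` exactly when `a` or `b` lies in that of `u`.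
The two roots `v ± i s` of `x² - 2 v x + η` form such a pair, and every eigenvalue `u` of `U`
is nonzero, hence pairs with `b = η / u`. -/

open Matrix Complex

theorem spectrum.add_mem_add_smul_inv_iff {R A : Type*} [CommRing R] [Ring A] [Algebra R A]
    (u : Aˣ) {η a b : R} (hab : a * b = η) :
    a + b ∈ spectrum R (u + η • (↑u⁻¹ : A)) ↔ a ∈ spectrum R (u : A) ∨ b ∈ spectrum R (u : A) := by
  simp only [spectrum.mem_iff, Algebra.algebraMap_eq_smul_one]
  have hfactor : -((u : A) * ((a + b) • 1 - (u + η • (↑u⁻¹ : A))))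
      = (a • 1 - u) * (b • 1 - u) := by
    simp only [← hab, mul_sub, mul_add, sub_mul, smul_mul_assoc, mul_smul_comm, mul_one, one_mul,
      Units.mul_inv]
    module
  have hcomm : Commute (a • 1 - (u : A)) (b • 1 - u) :=
    ((Commute.one_left _).smul_left a).sub_left
      (((Commute.one_right _).smul_right b).sub_right (Commute.refl _))
  rw [← not_and_or, not_iff_not, ← hcomm.isUnit_mul_iff, ← hfactor, IsUnit.neg_iff,
    Units.isUnit_units_mul]

theorem spectrum.mul_mem_smul_iff {K A : Type*} [Field K] [Ring A] [Algebra K A] {r : K}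
    (hr : r ≠ 0) {s : K} {x : A} : r * s ∈ spectrum K (r • x) ↔ s ∈ spectrum K x :=
  spectrum.smul_mem_smul_iff (r := Units.mk0 r hr)

/-- Eigenvalues of V = (U + η U⁻¹)/2 versus eigenvalues of U: if v is an eigenvalue of V
then at least one of v ± i·s (with s² = η − v²) is an eigenvalue of U, and conversely every
eigenvalue of U has this form for some eigenvalue v of V. -/
theorem stmt0 {n : ℕ} (U : Matrix (Fin n) (Fin n) ℂ) (η : ℂ)
    (hU : IsUnit U.det)
    (V : Matrix (Fin n) (Fin n) ℂ) (hV : V = (1/2 : ℂ) • (U + η • U⁻¹)) :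
    (∀ v ∈ spectrum ℂ V, ∀ s : ℂ, s ^ 2 = η - v ^ 2 →
      (v + Complex.I * s ∈ spectrum ℂ U ∨ v - Complex.I * s ∈ spectrum ℂ U)) ∧
    (∀ u ∈ spectrum ℂ U, ∃ v ∈ spectrum ℂ V, ∃ s : ℂ, s ^ 2 = η - v ^ 2 ∧
      (u = v + Complex.I * s ∨ u = v - Complex.I * s)) := by
  have hspec : ∀ a b : ℂ, a * b = η → ((1 / 2) * (a + b) ∈ spectrum ℂ V ↔
      a ∈ spectrum ℂ U ∨ b ∈ spectrum ℂ U) := fun a b hab => by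
    rw [hV, spectrum.mul_mem_smul_iff (by norm_num)]
    exact spectrum.add_mem_add_smul_inv_iff (nonsingInvUnit U hU) hab
  refine ⟨fun v hv s hs => (hspec _ _ ?_).1 ?_, fun u hu => ?_⟩
  · linear_combination hs - s ^ 2 * I_sq
  · convert hv using 1; ring
  have hu0 : u ≠ 0 := fun h => (nonsingInvUnit U hU).zero_notMem_spectrum ℂ (h ▸ hu)
  obtain ⟨b, hub⟩ : ∃ b, u * b = η := ⟨η / u, mul_div_cancel₀ η hu0⟩
  refine ⟨(1 / 2) * (u + b), (hspec u b hub).2 (Or.inl hu), -I * (u - b) / 2, ?_, Or.inl ?_⟩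
  · linear_combination (u - b) ^ 2 / 4 * I_sq + hub
  · linear_combination (u - b) / 2 * I_sq
end

section
/- Let B̃ and R be real symmetric n×n matrices with B̃² = I and R² = I, let ρ ∈ (−2, 2), and set Ω = B̃R, Ω_S = (Ω + Ωᵀ)/2, and U = Ω + (ρ/2)B̃. If w is an eigenvalue of Ω_S with −1 < w < 1, then both complex numbers w + i√(1 − ρ²/4 − w²) and w − i√(1 − ρ²/4 − w²) are eigenvalues of U (viewed as a complex matrix). -/
/-!
Over `ℂ`, the anticommutator `S = B̃R + RB̃` commutes with the involutions `B̃` and `R`, so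
both preserve the eigenspace `E` of `S` for `2w`. On `E` they become involutions `b`, `r` with
`br + rb = 2w`, and `U` becomes `u = br + (ρ/2)b`, which satisfies
`u² - 2wu + (1 - ρ²/4) = 0`, a quadratic with roots `w ± i s`. Tracing `b(br + rb)` and
`(br + rb)r` gives `tr r = w tr b` and `tr b = w tr r`, hence `tr b = 0` as `w² ≠ 1`, and so
`tr u = w dim E`. If one root `λ` were not an eigenvalue, `u - λ` would be invertible, forcing
`u` to be the other root `μ`; the trace then gives `μ = w = λ`, a contradiction since `E ≠ 0`.
-/

open Matrix

section Algebra

variable {K A : Type*} [CommRing K] [Ring A] [Algebra K A] {b r : A} {w : K}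

theorem mul_self_add_smul_eq (hb : b * b = 1) (hr : r * r = 1)
    (hbr : b * r + r * b = (2 * w) • 1) (c : K) :
    (b * r + c • b) * (b * r + c • b) = (2 * w) • (b * r + c • b) - (1 - c ^ 2) • 1 := by
  have hrb : r * b = (2 * w) • 1 - b * r := eq_sub_of_add_eq' hbr
  have hbrbr : b * r * (b * r) = (2 * w) • (b * r) - 1 := by
    rw [mul_assoc, ← mul_assoc r, hrb, sub_mul, mul_sub, smul_mul_assoc, one_mul, mul_smul_comm,
      mul_assoc, hr, mul_one, hb]
  have hbbr : b * (b * r) = r := by rw [← mul_assoc, hb, one_mul]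
  have hbrb : b * r * b = (2 * w) • b - r := by
    rw [mul_assoc, hrb, mul_sub, mul_smul_comm, mul_one, hbbr]
  simp only [add_mul, mul_add, smul_mul_assoc, mul_smul_comm, hbrbr, hbbr, hbrb, hb]
  module

theorem sub_algebraMap_mul_sub_algebraMap_eq_zero {u : A} {p q : K}
    (hu : u * u = (p + q) • u - (p * q) • 1) :
    (u - algebraMap K A p) * (u - algebraMap K A q) = 0 := by
  simp only [Algebra.algebraMap_eq_smul_one, sub_mul, mul_sub, smul_mul_assoc, mul_smul_comm,
    one_mul, mul_one, hu]
  module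

theorem commute_mul_add_mul_self_left (hb : b * b = 1) : Commute (b * r + r * b) b := by
  rw [Commute, SemiconjBy, add_mul, mul_add, mul_assoc r, hb, ← mul_assoc b b, hb, mul_one,
    one_mul, add_comm, mul_assoc]

end Algebra

namespace Module.End

variable {K V : Type*} [Field K] [AddCommGroup V] [Module K V]

theorem HasEigenvalue.of_restrict {f : End K V} {p : Submodule K V} (hfp : ∀ x ∈ p, f x ∈ p)
    {μ : K} (h : HasEigenvalue (f.restrict hfp) μ) : f.HasEigenvalue μ := by
  obtain ⟨x, hx, hx0⟩ := h.exists_hasEigenvector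
  refine hasEigenvalue_of_hasEigenvector (x := x) ⟨?_, by simpa using hx0⟩
  rw [mem_eigenspace_iff] at hx ⊢
  exact congrArg Subtype.val hx

variable [CharZero K] {b r : End K V} {w : K}

theorem trace_eq_zero_of_anticommutator (hb : b * b = 1) (hr : r * r = 1)
    (hbr : b * r + r * b = (2 * w) • 1) (hw : w ^ 2 ≠ 1) : LinearMap.trace K V b = 0 := by
  set τ := LinearMap.trace K V
  have hbrb : τ (b * r * b) = τ r := by
    rw [LinearMap.trace_mul_cycle, hb, one_mul]
  have hrbr : τ (r * b * r) = τ b := by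
    rw [LinearMap.trace_mul_cycle, hr, one_mul]
  have hr_b : τ r = w * τ b := by
    have := congrArg (fun x => τ (x * b)) hbr
    simp only [add_mul, map_add, mul_assoc r, hb, mul_one, smul_mul_assoc, one_mul, map_smul,
      smul_eq_mul, hbrb] at this
    linear_combination this / 2
  have hb_r : τ b = w * τ r := by
    have := congrArg (fun x => τ (x * r)) hbr
    simp only [add_mul, map_add, mul_assoc b, hr, mul_one, smul_mul_assoc, one_mul, map_smul,
      smul_eq_mul, hrbr] at this
    linear_combination this / 2
  have : (1 - w ^ 2) * τ b = 0 := by linear_combination hb_r + w * hr_b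
  exact (mul_eq_zero.mp this).resolve_left (sub_ne_zero.mpr (Ne.symm hw))

variable [FiniteDimensional K V]

theorem hasEigenvalue_of_sub_mul_sub_eq_zero [Nontrivial V] {u : End K V} {p q : K}
    (hu : (u - algebraMap K (End K V) p) * (u - algebraMap K (End K V) q) = 0)
    (htr : 2 * LinearMap.trace K V u = (p + q) * finrank K V) : u.HasEigenvalue p := by
  by_contra hp
  rw [hasEigenvalue_iff_mem_spectrum, spectrum.mem_iff, not_not, ← IsUnit.neg_iff, neg_sub] at hp
  obtain rfl : u = algebraMap K (End K V) q := sub_eq_zero.mp ((hp.mul_right_eq_zero).mp hu)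
  have hqp : q = p := by
    have hd : (finrank K V : K) ≠ 0 := Nat.cast_ne_zero.mpr finrank_pos.ne'
    rw [Module.algebraMap_end_eq_smul_id, map_smul, LinearMap.trace_id, smul_eq_mul] at htr
    exact mul_right_cancel₀ hd (by linear_combination htr)
  rw [hqp, sub_self] at hp
  exact not_isUnit_zero hp

theorem hasEigenvalue_mul_add_smul_of_anticommutator [Nontrivial V] (hb : b * b = 1)
    (hr : r * r = 1) (hbr : b * r + r * b = (2 * w) • 1) (hw : w ^ 2 ≠ 1) {c p q : K}
    (hsum : p + q = 2 * w) (hprod : p * q = 1 - c ^ 2) : (b * r + c • b).HasEigenvalue p := by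
  refine hasEigenvalue_of_sub_mul_sub_eq_zero (q := q)
    (sub_algebraMap_mul_sub_algebraMap_eq_zero ?_) ?_
  · rw [mul_self_add_smul_eq hb hr hbr, hsum, hprod]
  · have htr : 2 * LinearMap.trace K V (b * r) = 2 * w * finrank K V := by
      have := congrArg (LinearMap.trace K V) hbr
      rw [map_add, LinearMap.trace_mul_comm K r b, map_smul, LinearMap.trace_one,
        smul_eq_mul] at this
      linear_combination this
    rw [map_add, map_smul, trace_eq_zero_of_anticommutator hb hr hbr hw, smul_zero, add_zero,
      htr, hsum]

theorem hasEigenvalue_mul_add_smul_of_hasEigenvalue_anticommutator (hb : b * b = 1)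
    (hr : r * r = 1) (hbr : (b * r + r * b).HasEigenvalue (2 * w)) (hw : w ^ 2 ≠ 1) {c p q : K}
    (hsum : p + q = 2 * w) (hprod : p * q = 1 - c ^ 2) : (b * r + c • b).HasEigenvalue p := by
  set E := (b * r + r * b).eigenspace (2 * w)
  have hbE : ∀ x ∈ E, b x ∈ E := mapsTo_genEigenspace_of_comm
    (commute_mul_add_mul_self_left hb) _ _
  have hrE : ∀ x ∈ E, r x ∈ E := mapsTo_genEigenspace_of_comm
    (add_comm (b * r) _ ▸ commute_mul_add_mul_self_left hr) _ _
  have huE : ∀ x ∈ E, (b * r + c • b) x ∈ E := fun x hx => by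
    simpa using E.add_mem (hbE _ (hrE x hx)) (E.smul_mem c (hbE x hx))
  have : Nontrivial E := Submodule.nontrivial_iff_ne_bot.mpr hbr
  refine HasEigenvalue.of_restrict huE ?_
  have key := hasEigenvalue_mul_add_smul_of_anticommutator
    (b := b.restrict hbE) (r := r.restrict hrE) ?_ ?_ ?_ hw hsum hprod
  · convert key using 1
    ext x
    simp
  · exact LinearMap.ext fun x => Subtype.ext (LinearMap.congr_fun hb x)
  · exact LinearMap.ext fun x => Subtype.ext (LinearMap.congr_fun hr x)
  · ext x
    simpa using mem_eigenspace_iff.mp x.2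

end Module.End

namespace Matrix

variable {ι : Type*} [Fintype ι] [DecidableEq ι]

theorem map_mem_spectrum_map {K L : Type*} [Field K] [Field L] (f : K →+* L)
    {A : Matrix ι ι K} {a : K} (ha : a ∈ spectrum K A) : f a ∈ spectrum L (A.map f) := by
  rw [mem_spectrum_iff_isRoot_charpoly] at ha ⊢
  rw [charpoly_map]
  exact ha.map

theorem mem_spectrum_mul_add_smul_of_anticommutator {K : Type*} [Field K] [CharZero K]
    {B R : Matrix ι ι K} {w c p q : K} (hB : B * B = 1) (hR : R * R = 1)
    (hBR : 2 * w ∈ spectrum K (B * R + R * B)) (hw : w ^ 2 ≠ 1)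
    (hsum : p + q = 2 * w) (hprod : p * q = 1 - c ^ 2) : p ∈ spectrum K (B * R + c • B) := by
  let φ : Matrix ι ι K ≃ₐ[K] Module.End K (ι → K) := toLinAlgEquiv'
  rw [← AlgEquiv.spectrum_eq φ, ← Module.End.hasEigenvalue_iff_mem_spectrum] at hBR ⊢
  simp only [map_add, map_mul, map_smul] at hBR ⊢
  exact Module.End.hasEigenvalue_mul_add_smul_of_hasEigenvalue_anticommutator
    (by rw [← map_mul, hB, map_one]) (by rw [← map_mul, hR, map_one]) hBR hw hsum hprod

end Matrix

theorem stmt3_general {n : ℕ} (Bt R : Matrix (Fin n) (Fin n) ℝ) (ρ : ℝ)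
    (hBt : Btᵀ = Bt) (hR : Rᵀ = R) (hB2 : Bt * Bt = 1) (hR2 : R * R = 1)
    (Ω ΩS U : Matrix (Fin n) (Fin n) ℝ)
    (hΩ : Ω = Bt * R) (hΩS : ΩS = (1/2 : ℝ) • (Ω + Ωᵀ)) (hU : U = Ω + (ρ/2) • Bt)
    (w : ℝ) (hw1 : -1 < w) (hw2 : w < 1) (hw : w ∈ spectrum ℝ ΩS)
    (s : ℂ) (hs : s ^ 2 = ((1 - ρ^2/4 - w^2 : ℝ) : ℂ)) :
    ((w : ℂ) + Complex.I * s ∈ spectrum ℂ (U.map Complex.ofReal)) ∧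
    ((w : ℂ) - Complex.I * s ∈ spectrum ℂ (U.map Complex.ofReal)) := by
  have hanti : Bt * R + R * Bt = (2 : ℝ) • ΩS := by
    rw [hΩS, hΩ, transpose_mul, hBt, hR, smul_smul]
    norm_num
  have h2w : 2 * w ∈ spectrum ℝ (Bt * R + R * Bt) := by
    rw [hanti]
    exact spectrum.smul_mem_smul_iff (r := Units.mk0 (2 : ℝ) two_ne_zero) |>.mpr hw
  let φ := Complex.ofRealHom.mapMatrix (m := Fin n)
  have hUc : U.map Complex.ofReal = φ Bt * φ R + ((ρ : ℂ) / 2) • φ Bt := by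
    rw [show U.map Complex.ofReal = φ U from rfl, hU, hΩ, map_add, map_mul]
    congr 1
    ext i j
    simp [φ]
  have h2wc : 2 * (w : ℂ) ∈ spectrum ℂ (φ Bt * φ R + φ R * φ Bt) := by
    simpa [φ, Matrix.map_mul, Matrix.map_add] using map_mem_spectrum_map Complex.ofRealHom h2w
  have hw' : (w : ℂ) ^ 2 ≠ 1 := by exact_mod_cast (by nlinarith : w ^ 2 ≠ 1)
  have key : ∀ t : ℂ, t ^ 2 = ((1 - ρ^2/4 - w^2 : ℝ) : ℂ) →
      (w : ℂ) + Complex.I * t ∈ spectrum ℂ (U.map Complex.ofReal) := fun t ht => by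
    rw [hUc]
    refine mem_spectrum_mul_add_smul_of_anticommutator (q := w - Complex.I * t)
      (by rw [← map_mul, hB2, map_one]) (by rw [← map_mul, hR2, map_one])
      h2wc hw' (by ring) ?_
    push_cast at ht
    linear_combination (-t ^ 2) * Complex.I_sq + ht
  refine ⟨key s hs, ?_⟩
  simpa [sub_eq_add_neg] using key (-s) (by rwa [neg_sq])

/-- If w ∈ (−1,1) is an eigenvalue of Ω_S = (Ω + Ωᵀ)/2, then both w ± i√(1 − ρ²/4 − w²)
are (complex) eigenvalues of U = Ω + (ρ/2)B̃. -/
theorem stmt3 {n : ℕ} (Bt R : Matrix (Fin n) (Fin n) ℝ) (ρ : ℝ)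
    (hρ : ρ ∈ Set.Ioo (-2 : ℝ) 2)
    (hBt : Btᵀ = Bt) (hR : Rᵀ = R) (hB2 : Bt * Bt = 1) (hR2 : R * R = 1)
    (Ω ΩS U : Matrix (Fin n) (Fin n) ℝ)
    (hΩ : Ω = Bt * R) (hΩS : ΩS = (1/2 : ℝ) • (Ω + Ωᵀ)) (hU : U = Ω + (ρ/2) • Bt)
    (w : ℝ) (hw1 : -1 < w) (hw2 : w < 1) (hw : w ∈ spectrum ℝ ΩS)
    (s : ℂ) (hs : s ^ 2 = ((1 - ρ^2/4 - w^2 : ℝ) : ℂ)) :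
    ((w : ℂ) + Complex.I * s ∈ spectrum ℂ (U.map Complex.ofReal)) ∧
    ((w : ℂ) - Complex.I * s ∈ spectrum ℂ (U.map Complex.ofReal)) :=
  stmt3_general Bt R ρ hBt hR hB2 hR2 Ω ΩS U hΩ hΩS hU w hw1 hw2 hw s hs
end

section
/- Let B be a real symmetric projection (B² = B = Bᵀ) and R a real symmetric matrix with R² = I. A complex number ω ∉ {−1, 0, 1} is an eigenvalue of BR if and only if ω is an eigenvalue of Ω_S := BRB − B^⊥RB^⊥, where B^⊥ = I − B. -/
/-!
If `BRv = ωv` with `ω ≠ 0`, then `v` lies in the range of `B`, so `Ω_S v = BRBv = ωv`.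
Conversely `B Ω_S = BRB` and `B^⊥ Ω_S = -B^⊥RB^⊥`, so an eigenvector `x` of `Ω_S` gives the
eigenvector `Bx` of `BR` unless `Bx = 0`. In that case `B^⊥Rx = -ωx`, and `w = BRx` is an
eigenvector of `BR`: from `R² = 1`, `Rw = x + ωRx`, hence `BRw = ωw`; and `w ≠ 0`, since
otherwise `Rx = -ωx` and `x = R²x = ω²x`.
-/

open Matrix

namespace IsIdempotentElem

variable {R : Type*} [Ring R] {p : R}

theorem mul_compression (hp : IsIdempotentElem p) (s : R) :
    p * (p * s * p - (1 - p) * s * (1 - p)) = p * s * p := by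
  rw [mul_sub, ← mul_assoc, ← mul_assoc, ← mul_assoc, ← mul_assoc, hp.eq, hp.mul_one_sub_self,
    zero_mul, zero_mul, sub_zero]

theorem one_sub_mul_compression (hp : IsIdempotentElem p) (s : R) :
    (1 - p) * (p * s * p - (1 - p) * s * (1 - p)) = -((1 - p) * s * (1 - p)) := by
  rw [mul_sub, ← mul_assoc, ← mul_assoc, ← mul_assoc, ← mul_assoc, hp.one_sub.eq,
    hp.one_sub_mul_self, zero_mul, zero_mul, zero_sub]

end IsIdempotentElem

namespace Module.End

variable {K V : Type*} [Field K] [AddCommGroup V] [Module K V] {p s : End K V} {ω : K}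

theorem apply_eq_self_of_mul_apply_eq_smul (hp : IsIdempotentElem p) (hω : ω ≠ 0) {v : V}
    (hv : (p * s) v = ω • v) : p v = v := by
  refine smul_right_injective V hω (?_ : ω • p v = ω • v)
  rw [← map_smul, ← hv, ← mul_apply, ← mul_assoc, hp.eq, hv]

theorem hasEigenvector_compression_of_hasEigenvector_mul (hp : IsIdempotentElem p) (hω : ω ≠ 0)
    {v : V} (hv : (p * s).HasEigenvector ω v) :
    (p * s * p - (1 - p) * s * (1 - p)).HasEigenvector ω v := by
  have hv' : (p * s) v = ω • v := mem_eigenspace_iff.1 hv.1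
  have hpv : p v = v := apply_eq_self_of_mul_apply_eq_smul hp hω hv'
  have hqv : (1 - p) v = 0 := by simp [hpv]
  refine ⟨mem_eigenspace_iff.2 ?_, hv.2⟩
  simp only [LinearMap.sub_apply, mul_apply, hpv, hqv, map_zero, sub_zero]
  exact hv'

theorem hasEigenvector_mul_apply_of_apply_eq_zero (hs : s * s = 1) (hω : ω ^ 2 ≠ 1) {v : V}
    (hv0 : v ≠ 0) (hpv : p v = 0) (hv : ((1 - p) * s) v = -ω • v) :
    (p * s).HasEigenvector ω (p (s v)) := by
  set w := p (s v)
  have hssv : ∀ x, s (s x) = x := fun x => by rw [← mul_apply, hs, one_apply]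
  have hsv : s v = w - ω • v := by
    simp only [mul_apply, LinearMap.sub_apply, one_apply] at hv
    linear_combination (norm := module) hv
  have hsw : s w = v + ω • s v := by
    have hw : w = s v + ω • v := by rw [hsv]; module
    conv_lhs => rw [hw]
    rw [map_add, map_smul, hssv]
  refine ⟨mem_eigenspace_iff.2 ?_, fun hw0 => hv0 ?_⟩
  · rw [mul_apply, hsw, map_add, map_smul, hpv, zero_add]
  · have hv2 : v = (ω ^ 2) • v := by
      conv_lhs => rw [← hssv v]
      rw [hsv, hw0, zero_sub, map_neg, map_smul, hsv, hw0]
      module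
    have h : (1 - ω ^ 2) • v = 0 := by rw [sub_smul, one_smul, ← hv2, sub_self]
    exact (smul_eq_zero.1 h).resolve_left (sub_ne_zero.2 hω.symm)

theorem hasEigenvalue_mul_iff_hasEigenvalue_compression (hp : IsIdempotentElem p)
    (hs : s * s = 1) (hω0 : ω ≠ 0) (hω2 : ω ^ 2 ≠ 1) :
    (p * s).HasEigenvalue ω ↔ (p * s * p - (1 - p) * s * (1 - p)).HasEigenvalue ω := by
  refine ⟨fun h => ?_, fun h => ?_⟩
  · obtain ⟨v, hv⟩ := h.exists_hasEigenvector
    exact hasEigenvalue_of_hasEigenvector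
      (hasEigenvector_compression_of_hasEigenvector_mul hp hω0 hv)
  obtain ⟨x, hx⟩ := h.exists_hasEigenvector
  have hxω := mem_eigenspace_iff.1 hx.1
  by_cases hpx : p x = 0
  · have hqx : (1 - p) x = x := by simp [hpx]
    have hx' : ((1 - p) * s) x = -ω • x := by
      have := congr((1 - p) $hxω)
      rw [← mul_apply, hp.one_sub_mul_compression, map_smul, hqx, LinearMap.neg_apply] at this
      rw [neg_smul, ← this, neg_neg, mul_apply ((1 - p) * s), hqx]
    exact hasEigenvalue_of_hasEigenvector
      (hasEigenvector_mul_apply_of_apply_eq_zero hs hω2 hx.2 hpx hx')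
  · have hpx' : (p * s) (p x) = ω • p x := by
      have := congr(p $hxω)
      rwa [← mul_apply, hp.mul_compression, map_smul] at this
    exact hasEigenvalue_of_hasEigenvector ⟨mem_eigenspace_iff.2 hpx', hpx⟩

end Module.End

theorem stmt6_general {n : ℕ} (B R : Matrix (Fin n) (Fin n) ℝ)
    (hB2 : B * B = B) (hR2 : R * R = 1)
    (ω : ℂ) (hω : ω ∉ ({-1, 0, 1} : Set ℂ)) :
    ω ∈ spectrum ℂ ((B * R).map Complex.ofReal) ↔
    ω ∈ spectrum ℂ ((B * R * B - (1 - B) * R * (1 - B)).map Complex.ofReal) := by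
  simp only [Set.mem_insert_iff, Set.mem_singleton_iff, not_or] at hω
  obtain ⟨hωn1, hω0, hω1⟩ := hω
  have hω2 : ω ^ 2 ≠ 1 := by rw [Ne, sq_eq_one_iff]; tauto
  let φ : Matrix (Fin n) (Fin n) ℝ →+* Module.End ℂ (Fin n → ℂ) :=
    toLinAlgEquiv'.toRingHom.comp Complex.ofRealHom.mapMatrix
  have hspec (X : Matrix (Fin n) (Fin n) ℝ) :
      ω ∈ spectrum ℂ (X.map Complex.ofReal) ↔ (φ X).HasEigenvalue ω := by
    rw [Module.End.hasEigenvalue_iff_mem_spectrum, ← spectrum_toLin']; rfl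
  rw [hspec, hspec, map_sub, map_mul, map_mul, map_mul, map_mul, map_mul, map_sub, map_one]
  exact Module.End.hasEigenvalue_mul_iff_hasEigenvalue_compression
    (IsIdempotentElem.map (e := B) hB2 φ) (by rw [← map_mul, hR2, map_one]) hω0 hω2

/-- ω ∉ {−1,0,1} is an eigenvalue of BR iff it is an eigenvalue of
Ω_S = BRB − B^⊥RB^⊥, where B^⊥ = I − B. -/
theorem stmt6 {n : ℕ} (B R : Matrix (Fin n) (Fin n) ℝ)
    (hBs : Bᵀ = B) (hB2 : B * B = B) (hRs : Rᵀ = R) (hR2 : R * R = 1)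
    (ω : ℂ) (hω : ω ∉ ({-1, 0, 1} : Set ℂ)) :
    ω ∈ spectrum ℂ ((B * R).map Complex.ofReal) ↔
    ω ∈ spectrum ℂ ((B * R * B - (1 - B) * R * (1 - B)).map Complex.ofReal) :=
  stmt6_general B R hB2 hR2 ω hω
end

section
/- Let B be a real symmetric projection, B^⊥ = I − B, and R real symmetric with R² = I. A complex number ω ∉ {−1, 0, 1} is an eigenvalue of BRB if and only if ω is an eigenvalue of −B^⊥RB^⊥. -/
/-!
If `P` is idempotent, `S² = 1` and `PSPv = ωv` with `v ≠ 0`, `ω ≠ 0`, then `Pv = v` and `PSv = ωv`,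
so `u := (1 - P)Sv = Sv - ωv` satisfies `(1 - P)S(1 - P)u = (1 - P)(v - ωSv) = -ωu`. It is nonzero
for `ω ≠ ±1`: otherwise `Sv = ωv` and `v = S²v = ω²v`. Applying this to the idempotent `1 - P`
gives the converse.
-/

namespace Module.End

variable {K V : Type*} [Field K] [AddCommGroup V] [Module K V] {P S : End K V} {ω : K}

theorem HasEigenvector.compl_sandwich (hP : IsIdempotentElem P) (hS : S * S = 1)
    (hω0 : ω ≠ 0) (hω1 : ω ≠ 1) (hωm1 : ω ≠ -1) {v : V} (hv : (P * S * P).HasEigenvector ω v) :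
    ((1 - P) * S * (1 - P)).HasEigenvector (-ω) ((1 - P) (S v)) := by
  have hPSP : P (S (P v)) = ω • v := hv.apply_eq_smul
  have hPv : P v = v := smul_right_injective V hω0 <| by
    simp only [← hPSP, ← map_smul, ← mul_apply P P, hP.eq]
  have hPSv : P (S v) = ω • v := by rwa [hPv] at hPSP
  have hSSv : S (S v) = v := by rw [← mul_apply, hS, one_apply]
  have hQ : ∀ x, (1 - P) ((1 - P) x) = (1 - P) x := fun x => by rw [← mul_apply, hP.one_sub.eq]
  have hu : (1 - P) (S v) = S v - ω • v := by rw [LinearMap.sub_apply, one_apply, hPSv]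
  have hSu : S ((1 - P) (S v)) = v - ω • S v := by rw [hu, map_sub, map_smul, hSSv]
  refine hasEigenvector_iff.2 ⟨mem_eigenspace_iff.2 ?_, ?_⟩
  · calc ((1 - P) * S * (1 - P)) ((1 - P) (S v))
        = (1 - P) (S ((1 - P) (S v))) := by rw [mul_apply, mul_apply, hQ]
      _ = (1 - P) v - ω • (1 - P) (S v) := by rw [hSu, map_sub, map_smul]
      _ = -ω • (1 - P) (S v) := by
        rw [LinearMap.sub_apply, one_apply, hPv, sub_self, zero_sub, neg_smul]
  · intro hu0
    have hSv : S v = ω • v := sub_eq_zero.1 (hu ▸ hu0)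
    have : (ω * ω - 1) • v = 0 := by
      rw [sub_smul, one_smul, mul_smul, ← hSv, ← map_smul, ← hSv, hSSv, sub_self]
    refine hv.2 ((smul_eq_zero.1 this).resolve_left (sub_ne_zero.2 ?_))
    rw [Ne, mul_self_eq_one_iff, not_or]
    exact ⟨hω1, hωm1⟩

theorem hasEigenvalue_sandwich_iff (hP : IsIdempotentElem P) (hS : S * S = 1)
    (hω0 : ω ≠ 0) (hω1 : ω ≠ 1) (hωm1 : ω ≠ -1) :
    (P * S * P).HasEigenvalue ω ↔ (-((1 - P) * S * (1 - P))).HasEigenvalue ω := by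
  rw [hasEigenvalue_neg_iff]
  constructor
  · intro hω
    obtain ⟨v, hv⟩ := hω.exists_hasEigenvector
    exact hasEigenvalue_of_hasEigenvector (hv.compl_sandwich hP hS hω0 hω1 hωm1)
  · intro hω
    obtain ⟨v, hv⟩ := hω.exists_hasEigenvector
    have hu := hv.compl_sandwich hP.one_sub hS (neg_ne_zero.2 hω0)
      (by rwa [Ne, neg_eq_iff_eq_neg]) (by rwa [Ne, neg_inj])
    rw [sub_sub_cancel, neg_neg] at hu
    exact hasEigenvalue_of_hasEigenvector hu

end Module.End

theorem Matrix.mem_spectrum_sandwich_iff {K ι : Type*} [Field K] [Fintype ι] [DecidableEq ι]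
    {P S : Matrix ι ι K} (hP : IsIdempotentElem P) (hS : S * S = 1) {ω : K}
    (hω0 : ω ≠ 0) (hω1 : ω ≠ 1) (hωm1 : ω ≠ -1) :
    ω ∈ spectrum K (P * S * P) ↔ ω ∈ spectrum K (-((1 - P) * S * (1 - P))) := by
  simp only [← AlgEquiv.spectrum_eq (toLinAlgEquiv' (R := K) (n := ι)), map_mul, map_neg, map_sub,
    map_one, ← Module.End.hasEigenvalue_iff_mem_spectrum]
  refine Module.End.hasEigenvalue_sandwich_iff (hP.map _) ?_ hω0 hω1 hωm1
  rw [← map_mul, hS, map_one]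

open Matrix

theorem stmt8_general {n : ℕ} (B R : Matrix (Fin n) (Fin n) ℝ)
    (hB2 : B * B = B) (hR2 : R * R = 1)
    (ω : ℂ) (hω : ω ∉ ({-1, 0, 1} : Set ℂ)) :
    ω ∈ spectrum ℂ ((B * R * B).map Complex.ofReal) ↔
    ω ∈ spectrum ℂ ((-((1 - B) * R * (1 - B))).map Complex.ofReal) := by
  simp only [Set.mem_insert_iff, Set.mem_singleton_iff, not_or] at hω
  obtain ⟨hωm1, hω0, hω1⟩ := hω
  let f := (Complex.ofRealHom : ℝ →+* ℂ).mapMatrix (m := Fin n)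
  have hS : f R * f R = 1 := by rw [← map_mul, hR2, map_one]
  show ω ∈ spectrum ℂ (f (B * R * B)) ↔ ω ∈ spectrum ℂ (f (-((1 - B) * R * (1 - B))))
  simp only [map_mul, map_neg, map_sub, map_one]
  exact Matrix.mem_spectrum_sandwich_iff (IsIdempotentElem.map hB2 f) hS hω0 hω1 hωm1

/-- ω ∉ {−1,0,1} is an eigenvalue of BRB iff it is an eigenvalue of −B^⊥RB^⊥. -/
theorem stmt8 {n : ℕ} (B R : Matrix (Fin n) (Fin n) ℝ)
    (hBs : Bᵀ = B) (hB2 : B * B = B) (hRs : Rᵀ = R) (hR2 : R * R = 1)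
    (ω : ℂ) (hω : ω ∉ ({-1, 0, 1} : Set ℂ)) :
    ω ∈ spectrum ℂ ((B * R * B).map Complex.ofReal) ↔
    ω ∈ spectrum ℂ ((-((1 - B) * R * (1 - B))).map Complex.ofReal) :=
  stmt8_general B R hB2 hR2 ω hω
end

section
/- Let S have full column rank, R be symmetric with R² = I, B = S(SᵀS)^{-1}Sᵀ, W = (SᵀS)^{-1}SᵀRS, and Ω_S = BRB − B^⊥RB^⊥ with B^⊥ = I − B. Then W is singular if and only if Ω_S is singular. -/
/-!
Write `B = S P` with `P = (SᵀS)⁻¹Sᵀ`, so that `P S = 1`, `B² = B` and `W = P R S`.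
Because `B` and `1 - B` are complementary idempotents, `Ω_S x = 0` splits into `B R B x = 0` and
`(1 - B) R (1 - B) x = 0`. Vectors `y` with `B y ≠ 0` and `B R B y = 0` correspond to kernel
vectors of `W` via `y ↦ P y` and `z ↦ S z`. A vector `x` with `(1 - B) x ≠ 0` and
`(1 - B) R (1 - B) x = 0` yields such a `y`, namely `R (1 - B) x`: the involution `R` swaps the
two conditions.
-/

open Matrix

namespace Matrix

section CommRing

variable {K ι κ : Type*} [CommRing K] [Fintype ι] [Fintype κ]

theorem mulVec_compression_sub_eq_zero_iff [DecidableEq ι] {B R : Matrix ι ι K}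
    (hB : B * B = B) (x : ι → K) :
    (B * R * B - (1 - B) * R * (1 - B)) *ᵥ x = 0 ↔
      (B * R * B) *ᵥ x = 0 ∧ ((1 - B) * R * (1 - B)) *ᵥ x = 0 := by
  refine ⟨fun hx => ?_, fun ⟨h₁, h₂⟩ => by rw [sub_mulVec, h₁, h₂, sub_zero]⟩
  have hB_compl : B * (1 - B) = 0 := by rw [mul_sub, mul_one, hB, sub_self]
  have hB_Ω : B * (B * R * B - (1 - B) * R * (1 - B)) = B * R * B := by
    simp only [mul_sub, ← mul_assoc, hB, hB_compl, zero_mul, sub_zero]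
  have h₁ : (B * R * B) *ᵥ x = 0 := by rw [← hB_Ω, ← mulVec_mulVec, hx, mulVec_zero]
  rw [sub_mulVec, h₁, zero_sub, neg_eq_zero] at hx
  exact ⟨h₁, hx⟩

theorem exists_compression_mulVec_eq_zero_of_compl [DecidableEq ι] {B R : Matrix ι ι K}
    (hB : B * B = B) (hR : R * R = 1) {x : ι → K} (hx : (1 - B) *ᵥ x ≠ 0)
    (hRx : ((1 - B) * R * (1 - B)) *ᵥ x = 0) :
    ∃ y, B *ᵥ y ≠ 0 ∧ (B * R * B) *ᵥ y = 0 := by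
  set y := R *ᵥ ((1 - B) *ᵥ x)
  have hBy : B *ᵥ y = y := by
    rw [← mulVec_mulVec, ← mulVec_mulVec] at hRx
    rwa [sub_mulVec, one_mulVec, sub_eq_zero, eq_comm] at hRx
  have hRy : R *ᵥ y = (1 - B) *ᵥ x := by rw [mulVec_mulVec, hR, one_mulVec]
  refine ⟨y, fun hy => hx ?_, ?_⟩
  · rw [← hRy, ← hBy, hy, mulVec_zero]
  · rw [← mulVec_mulVec, hBy, ← mulVec_mulVec, hRy, mulVec_mulVec, mul_sub, mul_one, hB,
      sub_self, zero_mulVec]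

theorem exists_compression_sub_mulVec_eq_zero_iff [DecidableEq ι] {B R : Matrix ι ι K}
    (hB : B * B = B) (hR : R * R = 1) :
    (∃ x ≠ 0, (B * R * B - (1 - B) * R * (1 - B)) *ᵥ x = 0) ↔
      ∃ y, B *ᵥ y ≠ 0 ∧ (B * R * B) *ᵥ y = 0 := by
  constructor
  · rintro ⟨x, hx, hΩx⟩
    obtain ⟨h₁, h₂⟩ := (mulVec_compression_sub_eq_zero_iff hB x).mp hΩx
    by_cases hBx : B *ᵥ x = 0
    · refine exists_compression_mulVec_eq_zero_of_compl hB hR ?_ h₂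
      rwa [sub_mulVec, one_mulVec, hBx, sub_zero]
    · exact ⟨x, hBx, h₁⟩
  · rintro ⟨y, hy, hRy⟩
    refine ⟨B *ᵥ y, hy, (mulVec_compression_sub_eq_zero_iff hB _).mpr ⟨?_, ?_⟩⟩
    · rw [mulVec_mulVec, mul_assoc, hB, hRy]
    · rw [mulVec_mulVec, mul_assoc _ (1 - B), sub_mul 1 B B, one_mul, hB, sub_self, mul_zero,
        zero_mulVec]

theorem exists_mulVec_eq_zero_iff_of_mul_eq_one [DecidableEq κ] {S : Matrix ι κ K}
    {P : Matrix κ ι K} (hPS : P * S = 1) (R : Matrix ι ι K) :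
    (∃ z ≠ 0, (P * R * S) *ᵥ z = 0) ↔
      ∃ y, (S * P) *ᵥ y ≠ 0 ∧ (S * P * R * (S * P)) *ᵥ y = 0 := by
  have hS : ∀ z, S *ᵥ z = 0 → z = 0 := fun z hz => by
    rw [← one_mulVec z, ← hPS, ← mulVec_mulVec, hz, mulVec_zero]
  constructor
  · rintro ⟨z, hz, hWz⟩
    refine ⟨S *ᵥ z, ?_, ?_⟩
    · rw [mulVec_mulVec, Matrix.mul_assoc, hPS, Matrix.mul_one]
      exact fun h => hz (hS z h)
    · rw [mulVec_mulVec, show S * P * R * (S * P) * S = S * (P * R * S) by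
        simp only [Matrix.mul_assoc, hPS, Matrix.mul_one], ← mulVec_mulVec, hWz, mulVec_zero]
  · rintro ⟨y, hy, hRy⟩
    refine ⟨P *ᵥ y, fun h => hy (by rw [← mulVec_mulVec, h, mulVec_zero]), ?_⟩
    rw [mulVec_mulVec, show P * R * S * P = P * (S * P * R * (S * P)) by
      simp only [← Matrix.mul_assoc, hPS, Matrix.one_mul], ← mulVec_mulVec, hRy, mulVec_zero]

theorem det_mul_mul_eq_zero_iff_det_compression_sub_eq_zero [IsDomain K] [DecidableEq ι]
    [DecidableEq κ] {S : Matrix ι κ K} {P : Matrix κ ι K} (hPS : P * S = 1) {R : Matrix ι ι K}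
    (hR : R * R = 1) :
    (P * R * S).det = 0 ↔
      (S * P * R * (S * P) - (1 - S * P) * R * (1 - S * P)).det = 0 := by
  have hB : S * P * (S * P) = S * P := by
    rw [Matrix.mul_assoc, ← Matrix.mul_assoc P, hPS, Matrix.one_mul]
  rw [← exists_mulVec_eq_zero_iff, ← exists_mulVec_eq_zero_iff,
    exists_mulVec_eq_zero_iff_of_mul_eq_one hPS, exists_compression_sub_mulVec_eq_zero_iff hB hR]

end CommRing

theorem isUnit_transpose_mul_self_of_linearIndependent {K ι κ : Type*} [Field K] [LinearOrder K]
    [IsStrictOrderedRing K] [Fintype ι] [Fintype κ] [DecidableEq κ] {S : Matrix ι κ K}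
    (hS : LinearIndependent K Sᵀ) : IsUnit (Sᵀ * S) := by
  rw [← mulVec_injective_iff_isUnit, ← coe_mulVecLin, ← LinearMap.ker_eq_bot,
    ker_mulVecLin_transpose_mul_self, LinearMap.ker_eq_bot, coe_mulVecLin]
  exact mulVec_injective_iff.mpr hS

end Matrix

theorem stmt9_general {m n : ℕ} (S : Matrix (Fin m) (Fin n) ℝ) (hS : LinearIndependent ℝ Sᵀ)
    (R : Matrix (Fin m) (Fin m) ℝ) (hR2 : R * R = 1)
    (B : Matrix (Fin m) (Fin m) ℝ) (hB : B = S * (Sᵀ * S)⁻¹ * Sᵀ)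
    (W : Matrix (Fin n) (Fin n) ℝ) (hW : W = (Sᵀ * S)⁻¹ * Sᵀ * R * S)
    (ΩS : Matrix (Fin m) (Fin m) ℝ)
    (hΩS : ΩS = B * R * B - (1 - B) * R * (1 - B)) :
    W.det = 0 ↔ ΩS.det = 0 := by
  have hPS : (Sᵀ * S)⁻¹ * Sᵀ * S = 1 := by
    rw [Matrix.mul_assoc]
    exact nonsing_inv_mul _
      ((isUnit_iff_isUnit_det _).mp (isUnit_transpose_mul_self_of_linearIndependent hS))
  rw [Matrix.mul_assoc S] at hB
  subst hB hW hΩS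
  exact det_mul_mul_eq_zero_iff_det_compression_sub_eq_zero hPS hR2

/-- W = S⁺RS is singular iff Ω_S = BRB − B^⊥RB^⊥ is singular. -/
theorem stmt9 {m n : ℕ} (S : Matrix (Fin m) (Fin n) ℝ) (hS : LinearIndependent ℝ Sᵀ)
    (R : Matrix (Fin m) (Fin m) ℝ) (hRs : Rᵀ = R) (hR2 : R * R = 1)
    (B : Matrix (Fin m) (Fin m) ℝ) (hB : B = S * (Sᵀ * S)⁻¹ * Sᵀ)
    (W : Matrix (Fin n) (Fin n) ℝ) (hW : W = (Sᵀ * S)⁻¹ * Sᵀ * R * S)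
    (ΩS : Matrix (Fin m) (Fin m) ℝ)
    (hΩS : ΩS = B * R * B - (1 - B) * R * (1 - B)) :
    W.det = 0 ↔ ΩS.det = 0 :=
  stmt9_general S hS R hR2 B hB W hW ΩS hΩS
end

section
/- Let B be a real orthogonal projection, B^⊥ = I − B, R real symmetric with R² = I, and Ω_S = BRB − B^⊥RB^⊥. Suppose Ω_S v = w v for v ≠ 0 with w ∈ {−1, 1}. Then: (i) if Bv ≠ 0 then Ω_S(Bv) = w(Bv) and R(Bv) = w(Bv); (ii) if B^⊥v ≠ 0 then Ω_S(B^⊥v) = w(B^⊥v) and R(B^⊥v) = −w(B^⊥v). -/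
open Matrix

/-! Write `u = Bv`. Multiplying `Ω_S v = w v` by `B` gives `B R u = w u`, so `w u` is the
orthogonal projection of `R u` onto the range of `B`. As `R` is orthogonal and `w² = 1`, that
projection is as long as `R u` itself, which forces `R u = w u`; then `Ω_S u = B R u = w u`.
The claims about `B^⊥v` are the same ones for the projection `1 - B`, which turns `Ω_S` into
`-Ω_S` and `w` into `-w`. -/

namespace Matrix

variable {ι : Type*} [Fintype ι]

lemma mulVec_eq_self_of_dotProduct_self_eq {P : Matrix ι ι ℝ} (hPs : Pᵀ = P)
    (hP : IsIdempotentElem P) {r : ι → ℝ} (hr : (P *ᵥ r) ⬝ᵥ (P *ᵥ r) = r ⬝ᵥ r) :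
    P *ᵥ r = r := by
  have hcross : r ⬝ᵥ (P *ᵥ r) = (P *ᵥ r) ⬝ᵥ (P *ᵥ r) :=
    calc r ⬝ᵥ (P *ᵥ r) = r ⬝ᵥ (Pᵀ *ᵥ P *ᵥ r) := by rw [hPs, mulVec_mulVec, hP.eq]
      _ = (P *ᵥ r) ⬝ᵥ (P *ᵥ r) := dotProduct_transpose_mulVec P r (P *ᵥ r)
  have hzero : (r - P *ᵥ r) ⬝ᵥ (r - P *ᵥ r) = 0 := by
    simp only [dotProduct_sub, sub_dotProduct, dotProduct_comm (P *ᵥ r) r]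
    linarith
  exact (sub_eq_zero.mp (dotProduct_self_eq_zero.mp hzero)).symm

variable [DecidableEq ι]

lemma dotProduct_mulVec_self_of_transpose_mul_self {R : Matrix ι ι ℝ} (hR : Rᵀ * R = 1)
    (u : ι → ℝ) : (R *ᵥ u) ⬝ᵥ (R *ᵥ u) = u ⬝ᵥ u := by
  rw [← dotProduct_transpose_mulVec, mulVec_mulVec, hR, one_mulVec]

def signedCompression (B R : Matrix ι ι ℝ) : Matrix ι ι ℝ :=
  B * R * B - (1 - B) * R * (1 - B)

lemma signedCompression_one_sub (B R : Matrix ι ι ℝ) :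
    signedCompression (1 - B) R = -signedCompression B R := by
  rw [signedCompression, signedCompression, sub_sub_cancel, neg_sub]

lemma mul_signedCompression {B : Matrix ι ι ℝ} (hB : IsIdempotentElem B)
    (R : Matrix ι ι ℝ) : B * signedCompression B R = B * R * B := by
  have hB0 : B * (1 - B) = 0 := by rw [mul_sub, mul_one, hB.eq, sub_self]
  simp only [signedCompression, mul_sub, ← mul_assoc, hB.eq, hB0, zero_mul, sub_zero]

lemma signedCompression_mulVec_of_mulVec_eq_self {B : Matrix ι ι ℝ} (R : Matrix ι ι ℝ)
    {u : ι → ℝ} (hu : B *ᵥ u = u) : signedCompression B R *ᵥ u = B *ᵥ R *ᵥ u := by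
  have hu' : (1 - B) *ᵥ u = 0 := by rw [sub_mulVec, one_mulVec, hu, sub_self]
  simp only [signedCompression, sub_mulVec, ← mulVec_mulVec, hu, hu', mulVec_zero, sub_zero]

section Eigen

variable {B R : Matrix ι ι ℝ} {w : ℝ} {v : ι → ℝ}

lemma mulVec_mulVec_eq_smul_of_signedCompression_eigen (hBs : Bᵀ = B) (hB : IsIdempotentElem B)
    (hR : Rᵀ * R = 1) (hw : w * w = 1) (heig : signedCompression B R *ᵥ v = w • v) :
    R *ᵥ B *ᵥ v = w • B *ᵥ v := by
  set u := B *ᵥ v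
  have hBRu : B *ᵥ R *ᵥ u = w • u := by
    rw [← mulVec_smul, ← heig, mulVec_mulVec, mulVec_mulVec, mulVec_mulVec,
      mul_signedCompression hB]
  have hlen : (B *ᵥ R *ᵥ u) ⬝ᵥ (B *ᵥ R *ᵥ u) = (R *ᵥ u) ⬝ᵥ (R *ᵥ u) := by
    rw [hBRu, dotProduct_mulVec_self_of_transpose_mul_self hR, dotProduct_smul, smul_dotProduct,
      smul_eq_mul, smul_eq_mul, ← mul_assoc, hw, one_mul]
  rw [← hBRu, mulVec_eq_self_of_dotProduct_self_eq hBs hB hlen]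

lemma signedCompression_mulVec_mulVec_eq_smul_of_eigen (hBs : Bᵀ = B) (hB : IsIdempotentElem B)
    (hR : Rᵀ * R = 1) (hw : w * w = 1) (heig : signedCompression B R *ᵥ v = w • v) :
    signedCompression B R *ᵥ B *ᵥ v = w • B *ᵥ v := by
  rw [signedCompression_mulVec_of_mulVec_eq_self R (by rw [mulVec_mulVec, hB.eq]),
    mulVec_mulVec_eq_smul_of_signedCompression_eigen hBs hB hR hw heig, mulVec_smul,
    mulVec_mulVec, hB.eq]

end Eigen

end Matrix

theorem stmt11_general {n : ℕ} (B R : Matrix (Fin n) (Fin n) ℝ)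
    (hBs : Bᵀ = B) (hB2 : B * B = B) (hRs : Rᵀ = R) (hR2 : R * R = 1)
    (ΩS : Matrix (Fin n) (Fin n) ℝ)
    (hΩS : ΩS = B * R * B - (1 - B) * R * (1 - B))
    (w : ℝ) (hw : w = 1 ∨ w = -1) (v : Fin n → ℝ)
    (heig : ΩS.mulVec v = w • v) :
    (B.mulVec v ≠ 0 →
      ΩS.mulVec (B.mulVec v) = w • B.mulVec v ∧
      R.mulVec (B.mulVec v) = w • B.mulVec v) ∧
    ((1 - B).mulVec v ≠ 0 →
      ΩS.mulVec ((1 - B).mulVec v) = w • (1 - B).mulVec v ∧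
      R.mulVec ((1 - B).mulVec v) = (-w) • (1 - B).mulVec v) := by
  change ΩS = signedCompression B R at hΩS
  subst hΩS
  have hB : IsIdempotentElem B := hB2
  have hR : Rᵀ * R = 1 := by rw [hRs, hR2]
  have hw2 : w * w = 1 := by rcases hw with rfl | rfl <;> norm_num
  have hBs' : (1 - B)ᵀ = 1 - B := by rw [transpose_sub, transpose_one, hBs]
  have heig' : signedCompression (1 - B) R *ᵥ v = (-w) • v := by
    rw [signedCompression_one_sub, neg_mulVec, heig, neg_smul]
  have hw2' : -w * -w = 1 := by rw [neg_mul_neg, hw2]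
  refine ⟨fun _ => ⟨?_, ?_⟩, fun _ => ⟨?_, ?_⟩⟩
  · exact signedCompression_mulVec_mulVec_eq_smul_of_eigen hBs hB hR hw2 heig
  · exact mulVec_mulVec_eq_smul_of_signedCompression_eigen hBs hB hR hw2 heig
  · have h := signedCompression_mulVec_mulVec_eq_smul_of_eigen hBs' hB.one_sub hR hw2' heig'
    rwa [signedCompression_one_sub, neg_mulVec, neg_smul, neg_inj] at h
  · exact mulVec_mulVec_eq_smul_of_signedCompression_eigen hBs' hB.one_sub hR hw2' heig'

/-- If Ω_S v = w v with w ∈ {−1,1} and v ≠ 0, then Bv (if nonzero) is an eigenvector of Ω_S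
and of R with eigenvalue w, and B^⊥v (if nonzero) is an eigenvector of Ω_S with eigenvalue w
and of R with eigenvalue −w. -/
theorem stmt11 {n : ℕ} (B R : Matrix (Fin n) (Fin n) ℝ)
    (hBs : Bᵀ = B) (hB2 : B * B = B) (hRs : Rᵀ = R) (hR2 : R * R = 1)
    (ΩS : Matrix (Fin n) (Fin n) ℝ)
    (hΩS : ΩS = B * R * B - (1 - B) * R * (1 - B))
    (w : ℝ) (hw : w = 1 ∨ w = -1) (v : Fin n → ℝ) (hv : v ≠ 0)
    (heig : ΩS.mulVec v = w • v) :
    (B.mulVec v ≠ 0 →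
      ΩS.mulVec (B.mulVec v) = w • B.mulVec v ∧
      R.mulVec (B.mulVec v) = w • B.mulVec v) ∧
    ((1 - B).mulVec v ≠ 0 →
      ΩS.mulVec ((1 - B).mulVec v) = w • (1 - B).mulVec v ∧
      R.mulVec ((1 - B).mulVec v) = (-w) • (1 - B).mulVec v) :=
  stmt11_general B R hBs hB2 hRs hR2 ΩS hΩS w hw v heig
end

section
/- Define τ_A(δ) = γ⋆ − 1 with γ⋆ = 4/(3 − √((2−ρ⋆)/(2+ρ⋆))) and ρ⋆ = 2√(1 − (1−δ)²) for δ ∈ (0, 1). Then as δ → 0⁺, 1 − τ_A(δ) = √(2δ) − 2δ + O(δ^{3/2}); consequently (1 − τ_A(δ))² = 2δ(1 − 2√(2δ) + O(δ)). -/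
open Asymptotics Filter

/-- Optimal ADMM rate as a function of the spectral gap δ = 1 − ω⋆. -/
noncomputable def tauA (δ : ℝ) : ℝ :=
  4 / (3 - Real.sqrt ((2 - 2 * Real.sqrt (1 - (1 - δ)^2)) /
        (2 + 2 * Real.sqrt (1 - (1 - δ)^2)))) - 1

/-!
With `r = √(1 − (1 − δ)²) = √(2δ − δ²)`, the quantity `1 − τ_A` equals
`2 − 4 / (3 − s)` where `s = √((1 − r)/(1 + r)) = 1 − r + r²/2 + O(r³)`, so
`1 − τ_A = r − r² + O(r³)`. Since `√(2δ) − r = δ² / (√(2δ) + r) = O(δ^{3/2})` and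
`r² = 2δ − δ²`, this gives `1 − τ_A = √(2δ) − 2δ + O(δ^{3/2})`. Squaring, the cross term
`(√(2δ))² = 2δ` cancels and only `4δ²` and the error times `O(√δ)` remain.
-/

open Real

lemma sqrt_one_sub_div_one_add_le {r : ℝ} (hr0 : 0 ≤ r) (hr1 : r ≤ 1 / 2) :
    √((1 - r) / (1 + r)) ≤ 1 - r + r ^ 2 / 2 := by
  rw [sqrt_le_left (by nlinarith), div_le_iff₀ (by linarith)]
  nlinarith [pow_nonneg hr0 3, pow_nonneg hr0 4, pow_nonneg hr0 5]

lemma le_sqrt_one_sub_div_one_add {r : ℝ} (hr0 : 0 ≤ r) (hr1 : r ≤ 1 / 2) :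
    1 - r + r ^ 2 / 2 - r ^ 3 ≤ √((1 - r) / (1 + r)) := by
  rw [le_sqrt (by nlinarith) (div_nonneg (by linarith) (by linarith)), le_div_iff₀ (by linarith)]
  nlinarith [pow_nonneg hr0 3, pow_nonneg hr0 4, pow_nonneg hr0 5, pow_nonneg hr0 6, pow_nonneg hr0 7]

/-- `1 − τ_A` in terms of `r = ρ⋆ / 2 = √(1 − (1 − δ)²)`. -/
noncomputable def rateGap (r : ℝ) : ℝ := 2 - 4 / (3 - √((1 - r) / (1 + r)))

lemma one_sub_tauA_eq_rateGap (δ : ℝ) : 1 - tauA δ = rateGap √(1 - (1 - δ) ^ 2) := by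
  have h (x : ℝ) : (2 - 2 * x) / (2 + 2 * x) = (1 - x) / (1 + x) := by
    rw [← mul_one_sub, ← mul_one_add, mul_div_mul_left _ _ two_ne_zero]
  rw [tauA, rateGap, h]
  ring

lemma abs_rateGap_sub_le {r : ℝ} (hr0 : 0 ≤ r) (hr1 : r ≤ 1 / 2) :
    |rateGap r - (r - r ^ 2)| ≤ 2 * r ^ 3 := by
  rw [rateGap]
  set s := √((1 - r) / (1 + r))
  have hsU : s ≤ 1 - r + r ^ 2 / 2 := sqrt_one_sub_div_one_add_le hr0 hr1
  have hsL : 1 - r + r ^ 2 / 2 - r ^ 3 ≤ s := le_sqrt_one_sub_div_one_add hr0 hr1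
  have hden : 0 < 3 - s := by nlinarith
  have hquot : 2 - 4 / (3 - s) - (r - r ^ 2) = (2 - 2 * s - (r - r ^ 2) * (3 - s)) / (3 - s) := by
    field_simp; ring
  rw [hquot, abs_div, abs_of_pos hden, div_le_iff₀ hden, abs_le]
  constructor <;> nlinarith [pow_nonneg hr0 3, pow_nonneg hr0 4, mul_nonneg hr0 (sub_nonneg.2 hsU)]

lemma sqrt_one_sub_one_sub_sq_le {δ : ℝ} (hδ0 : 0 ≤ δ) :
    √(1 - (1 - δ) ^ 2) ≤ √(2 * δ) :=
  sqrt_le_sqrt (by nlinarith)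

lemma sqrt_two_mul_sub_sqrt_one_sub_one_sub_sq_le {δ : ℝ} (hδ0 : 0 < δ) (hδ1 : δ ≤ 2) :
    √(2 * δ) - √(1 - (1 - δ) ^ 2) ≤ √δ ^ 3 := by
  have ht : 0 < √δ := sqrt_pos.2 hδ0
  have ht2 : √δ ^ 2 = δ := sq_sqrt hδ0.le
  have hr2 : √(1 - (1 - δ) ^ 2) ^ 2 = 2 * δ - δ ^ 2 := by rw [sq_sqrt (by nlinarith)]; ring
  have hu2 : √(2 * δ) ^ 2 = 2 * δ := sq_sqrt (by linarith)
  have hut : √δ ≤ √(2 * δ) := sqrt_le_sqrt (by linarith)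
  have hru := sqrt_one_sub_one_sub_sq_le hδ0.le
  have hr0 := sqrt_nonneg (1 - (1 - δ) ^ 2)
  -- `(√(2δ) - r) (√(2δ) + r) = δ²` and `√(2δ) + r ≥ √δ`
  have hprod : (√(2 * δ) - √(1 - (1 - δ) ^ 2)) * √δ ≤ √δ ^ 3 * √δ := by
    nlinarith [mul_le_mul_of_nonneg_left hut (sub_nonneg.2 hru)]
  exact le_of_mul_le_mul_right hprod ht

lemma abs_one_sub_tauA_sub_le {δ : ℝ} (hδ0 : 0 < δ) (hδ1 : δ ≤ 1 / 100) :
    |(1 - tauA δ) - (√(2 * δ) - 2 * δ)| ≤ 9 * √δ ^ 3 := by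
  set t := √δ
  set r := √(1 - (1 - δ) ^ 2)
  set u := √(2 * δ)
  have ht : 0 < t := sqrt_pos.2 hδ0
  have ht2 : t ^ 2 = δ := sq_sqrt hδ0.le
  have hr0 : 0 ≤ r := sqrt_nonneg _
  have hr2 : r ^ 2 = 2 * δ - δ ^ 2 := by rw [sq_sqrt (by nlinarith)]; ring
  have hu2 : u ^ 2 = 2 * δ := sq_sqrt (by linarith)
  have hu : u ≤ 3 / 2 * t := by nlinarith [sqrt_nonneg (2 * δ)]
  have hru : r ≤ u := sqrt_one_sub_one_sub_sq_le hδ0.le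
  have hur : u - r ≤ t ^ 3 := sqrt_two_mul_sub_sqrt_one_sub_one_sub_sq_le hδ0 (by linarith)
  have ht1 : t ≤ 1 / 10 := by nlinarith
  have hgap := abs_rateGap_sub_le hr0 (by linarith)
  have hr3 : r ^ 3 ≤ (3 / 2 * t) ^ 3 := pow_le_pow_left₀ hr0 (hru.trans hu) 3
  have hsplit : (1 - tauA δ) - (u - 2 * δ) = (rateGap r - (r - r ^ 2)) + (r - u) + t ^ 4 := by
    rw [one_sub_tauA_eq_rateGap]; linear_combination -hr2 - (t ^ 2 + δ) * ht2
  rw [hsplit]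
  calc |(rateGap r - (r - r ^ 2)) + (r - u) + t ^ 4|
      ≤ |rateGap r - (r - r ^ 2)| + |r - u| + |t ^ 4| := abs_add_three _ _ _
    _ ≤ 2 * (3 / 2 * t) ^ 3 + t ^ 3 + t ^ 3 := by
      gcongr
      · linarith
      · rw [abs_sub_comm, abs_of_nonneg (by linarith)]; exact hur
      · rw [abs_of_nonneg (by positivity)]; nlinarith [pow_pos ht 3]
    _ ≤ 9 * t ^ 3 := by nlinarith [pow_pos ht 3]

lemma abs_one_sub_tauA_sq_sub_le {δ : ℝ} (hδ0 : 0 < δ) (hδ1 : δ ≤ 1 / 100) :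
    |(1 - tauA δ) ^ 2 - 2 * δ * (1 - 2 * √(2 * δ))| ≤ 40 * δ ^ 2 := by
  have he := abs_one_sub_tauA_sub_le hδ0 hδ1
  set t := √δ
  set u := √(2 * δ)
  set e := (1 - tauA δ) - (u - 2 * δ)
  have ht : 0 < t := sqrt_pos.2 hδ0
  have ht2 : t ^ 2 = δ := sq_sqrt hδ0.le
  have hu2 : u ^ 2 = 2 * δ := sq_sqrt (by linarith)
  have hu : u ≤ 3 / 2 * t := by nlinarith [sqrt_nonneg (2 * δ)]
  have ht1 : t ≤ 1 / 10 := by nlinarith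
  have hsplit : (1 - tauA δ) ^ 2 - 2 * δ * (1 - 2 * u) = 4 * δ ^ 2 + e * (2 * (u - 2 * δ) + e) := by
    linear_combination hu2
  have hfactor : |2 * (u - 2 * δ) + e| ≤ 4 * t := by
    rw [abs_le] at he ⊢; constructor <;> nlinarith [sqrt_nonneg (2 * δ), pow_pos ht 3]
  rw [hsplit]
  calc |4 * δ ^ 2 + e * (2 * (u - 2 * δ) + e)|
      ≤ |4 * δ ^ 2| + |e| * |2 * (u - 2 * δ) + e| := by rw [← abs_mul]; exact abs_add_le _ _
    _ ≤ 4 * δ ^ 2 + 9 * t ^ 3 * (4 * t) := by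
      rw [abs_of_nonneg (by positivity)]; gcongr
    _ = 40 * δ ^ 2 := by rw [← ht2]; ring

/-- Asymptotics as δ → 0⁺: 1 − τ_A(δ) = √(2δ) − 2δ + O(δ^{3/2}) and consequently
(1 − τ_A(δ))² = 2δ(1 − 2√(2δ) + O(δ)). -/
theorem stmt18 :
    (fun δ : ℝ => (1 - tauA δ) - (Real.sqrt (2 * δ) - 2 * δ))
      =O[nhdsWithin 0 (Set.Ioi 0)] (fun δ : ℝ => δ ^ (3/2 : ℝ)) ∧
    (fun δ : ℝ => (1 - tauA δ)^2 - 2 * δ * (1 - 2 * Real.sqrt (2 * δ)))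
      =O[nhdsWithin 0 (Set.Ioi 0)] (fun δ : ℝ => δ ^ 2) := by
  have hsmall : ∀ᶠ δ in nhdsWithin (0 : ℝ) (Set.Ioi 0), δ ∈ Set.Ioc 0 (1 / 100) :=
    Ioc_mem_nhdsGT (by norm_num)
  constructor
  · refine IsBigO.of_bound 9 (hsmall.mono fun δ hδ => ?_)
    rw [norm_eq_abs, norm_eq_abs, abs_of_nonneg (rpow_nonneg hδ.1.le _),
      rpow_div_two_eq_sqrt 3 hδ.1.le]
    exact_mod_cast abs_one_sub_tauA_sub_le hδ.1 hδ.2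
  · refine IsBigO.of_bound 40 (hsmall.mono fun δ hδ => ?_)
    rw [norm_eq_abs, norm_eq_abs, abs_of_nonneg (sq_nonneg δ)]
    exact abs_one_sub_tauA_sq_sub_le hδ.1 hδ.2
end
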